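/- Given a graph G and an internal search schedule S, at every time step t the set of n-clear nodes equals the set of m-clear nodes and the set of n-clear edges equals the set of m-clear edges, where m refers to the mixed edge search game. In particular, node search and mixed edge search are equivalent. -/

import Mathlib

open SimpleGraph

/-- A move in a graph-search game: place a searcher, remove a searcher,
or slide a searcher along an edge. -/
inductive GMove (V : Type*) where
  | place (v : V)
  | remove (v : V)
  | slide (u v : V)

namespace GMove

/-- The node (if any) entered by the move. -/
def target {V : Type*} : GMove V → Option V
  | place v => some v
  | remove _ => none
  | slide _ v => some v

/-- The edge (if any) traversed by the move. -/
def traversed {V : Type*} : GMove V → Option (Sym2 V)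
  | slide u v => some s(u, v)
  | _ => none

end GMove

variable {V : Type*}

open Classical in
/-- Number of searchers located at each node after `t` moves
(the move between time `t` and `t+1` is `S t`). -/
noncomputable def occ (S : ℕ → GMove V) : ℕ → V → ℕ
  | 0 => fun _ => 0
  | t + 1 => fun x =>
    match S t with
    | .place v => if x = v then occ S t x + 1 else occ S t x
    | .remove v => if x = v then occ S t x - 1 else occ S t x
    | .slide u v =>
        if x = v then occ S t x + 1 else if x = u then occ S t x - 1 else occ S t x

/-- Number of searchers inside the graph after `t` moves. -/
def sn (S : ℕ → GMove V) : ℕ → ℕ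
  | 0 => 0
  | t + 1 =>
    match S t with
    | .place _ => sn S t + 1
    | .remove _ => sn S t - 1
    | .slide _ _ => sn S t

/-- A legal search schedule on `G`: slides go along edges starting from an occupied
node, and removals take place at occupied nodes. -/
def Legal (G : SimpleGraph V) (S : ℕ → GMove V) : Prop :=
  ∀ t, match S t with
    | .place _ => True
    | .remove v => 0 < occ S t v
    | .slide u v => G.Adj u v ∧ 0 < occ S t u

/-- An internal schedule never removes searchers from the graph. -/
def Internal (S : ℕ → GMove V) : Prop := ∀ t v, S t ≠ GMove.remove v

/-- A rooted schedule places searchers only at the root `r`. -/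
def RootedAt (S : ℕ → GMove V) (r : V) : Prop := ∀ t v, S t = GMove.place v → v = r

/-- The set of n-dirty nodes of the node game: initially all nodes are n-dirty;
after a move, a node is n-dirty iff it is joined to a previously n-dirty node by a
path all of whose nodes are unguarded. -/
def ndirty (G : SimpleGraph V) (S : ℕ → GMove V) : ℕ → Set V
  | 0 => Set.univ
  | t + 1 =>
    { u | ∃ w, w ∈ ndirty G S t ∧ ∃ p : G.Walk u w, ∀ x ∈ p.support, occ S (t + 1) x = 0 }

/-- The set of n-dirty edges: edges incident to an n-dirty node. -/
def nEdgeDirty (G : SimpleGraph V) (S : ℕ → GMove V) (t : ℕ) : Set (Sym2 V) :=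
  { e | e ∈ G.edgeSet ∧ ∃ v ∈ e, v ∈ ndirty G S t }

/-- The set of e-dirty edges of the edge game: initially all edges are e-dirty;
a traversed edge is cleared, and an edge is recontaminated when joined to a
(still) e-dirty edge by a path whose interior nodes are unguarded. -/
def edirty (G : SimpleGraph V) (S : ℕ → GMove V) : ℕ → Set (Sym2 V)
  | 0 => G.edgeSet
  | t + 1 =>
    (edirty G S t \ { e | (S t).traversed = some e }) ∪
      { e | ∃ x y q q', e = s(x, y) ∧ G.Adj x y ∧ G.Adj q q' ∧
          (s(q, q') ∈ edirty G S t ∧ (S t).traversed ≠ some s(q, q')) ∧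
          ∃ p : G.Walk y q, ∀ z ∈ p.support, occ S (t + 1) z = 0 }

/-- A node is e-dirty iff it is unguarded and adjacent to an e-dirty edge. -/
def edirtyNode (G : SimpleGraph V) (S : ℕ → GMove V) (t : ℕ) : Set V :=
  { v | occ S t v = 0 ∧ ∃ e ∈ edirty G S t, v ∈ e }

/-- The set of m-dirty edges of the mixed edge game: as in the edge game, but in
addition an edge both of whose endpoints are guarded becomes m-clear. -/
def mdirty (G : SimpleGraph V) (S : ℕ → GMove V) : ℕ → Set (Sym2 V)
  | 0 => G.edgeSet
  | t + 1 =>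
    (mdirty G S t \
        ({ e | (S t).traversed = some e } ∪ { e | ∀ v ∈ e, 0 < occ S (t + 1) v })) ∪
      { e | ∃ x y q q', e = s(x, y) ∧ G.Adj x y ∧ G.Adj q q' ∧
          (s(q, q') ∈ mdirty G S t ∧ (S t).traversed ≠ some s(q, q') ∧
            ¬ (∀ v ∈ (s(q, q') : Sym2 V), 0 < occ S (t + 1) v)) ∧
          ∃ p : G.Walk y q, ∀ z ∈ p.support, occ S (t + 1) z = 0 }

/-- A node is m-dirty iff it is unguarded and adjacent to an m-dirty edge. -/
def mdirtyNode (G : SimpleGraph V) (S : ℕ → GMove V) (t : ℕ) : Set V :=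
  { v | occ S t v = 0 ∧ ∃ e ∈ mdirty G S t, v ∈ e }

/-- The n-clear subgraph: n-clear nodes and all edges of `G` between them. -/
def nclearSubgraph (G : SimpleGraph V) (S : ℕ → GMove V) (t : ℕ) : G.Subgraph where
  verts := (ndirty G S t)ᶜ
  Adj a b := G.Adj a b ∧ a ∉ ndirty G S t ∧ b ∉ ndirty G S t
  adj_sub h := h.1
  edge_vert h := h.2.1
  symm := ⟨fun a b h => ⟨h.1.symm, h.2.2, h.2.1⟩⟩

/-- The e-clear subgraph: e-clear nodes and e-clear edges. -/
def eclearSubgraph (G : SimpleGraph V) (S : ℕ → GMove V) (t : ℕ) : G.Subgraph where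
  verts := { v | v ∉ edirtyNode G S t } ∪ { v | ∃ e ∈ G.edgeSet \ edirty G S t, v ∈ e }
  Adj a b := G.Adj a b ∧ s(a, b) ∈ G.edgeSet \ edirty G S t
  adj_sub h := h.1
  edge_vert {a b} h := Or.inr ⟨s(a, b), h.2, Sym2.mem_mk_left a b⟩
  symm := ⟨fun a b h => ⟨h.1.symm, by rw [Sym2.eq_swap]; exact h.2⟩⟩

/-! By induction on time, the n-dirty edges (the edges with an n-dirty endpoint) are exactly
the m-dirty edges. The crux is that an untraversed dirty edge stays dirty precisely while one of
its endpoints is unguarded: in an internal schedule a node loses its last searcher only by a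
slide out of it, and if that slide does not traverse the dirty edge, the edge's other endpoint,
n-dirty and still unguarded, recontaminates the vacated node. Recontamination along unguarded
walks acts identically in both games. Connectedness rules out isolated nodes, so the n-dirty
nodes are the unguarded endpoints of n-dirty edges, which turns the edge statement into the
node statement. -/

section NodeGame

variable {G : SimpleGraph V} {S : ℕ → GMove V} {t : ℕ}

lemma occ_succ_of_slide_of_ne {c d x : V} (h : S t = .slide c d) (hc : x ≠ c) (hd : x ≠ d) :
    occ S (t + 1) x = occ S t x := by
  simp [occ, h, hc, hd]

lemma occ_succ_of_slide_target {c d : V} (h : S t = .slide c d) :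
    occ S (t + 1) d = occ S t d + 1 := by
  simp [occ, h]

lemma exists_slide_of_occ_succ_eq_zero (hI : Internal S) {u : V} (h0 : occ S t u ≠ 0)
    (h1 : occ S (t + 1) u = 0) : ∃ d, S t = .slide u d := by
  cases hS : S t with
  | place v =>
    simp only [occ, hS] at h1
    split at h1 <;> omega
  | remove v => exact absurd hS (hI t v)
  | slide c d =>
    refine ⟨d, ?_⟩
    by_contra hcu
    have hc : u ≠ c := fun h => hcu (by rw [h])
    have hd : u ≠ d := by
      rintro rfl
      rw [occ_succ_of_slide_target hS] at h1
      omega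
    exact h0 (by rwa [occ_succ_of_slide_of_ne hS hc hd] at h1)

lemma traversed_ne_of_occ_eq_zero (hL : Legal G S) {w : V} {f : Sym2 V}
    (h0 : occ S t w = 0) (h1 : occ S (t + 1) w = 0) (hw : w ∈ f) :
    (S t).traversed ≠ some f := by
  intro htr
  have hleg := hL t
  cases hS : S t with
  | place v => simp [hS, GMove.traversed] at htr
  | remove v => simp [hS, GMove.traversed] at htr
  | slide c d =>
    rw [hS] at hleg
    simp only [hS, GMove.traversed, Option.some.injEq] at htr
    rcases Sym2.mem_iff.mp (htr ▸ hw) with rfl | rfl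
    · exact absurd hleg.2 (by omega)
    · rw [occ_succ_of_slide_target hS] at h1
      omega

lemma occ_eq_zero_of_mem_ndirty {v : V} (hv : v ∈ ndirty G S t) : occ S t v = 0 := by
  cases t with
  | zero => rfl
  | succ t =>
    obtain ⟨_, _, p, hp⟩ := hv
    exact hp v p.start_mem_support

lemma mem_ndirty_of_walk {u w : V} (hw : w ∈ ndirty G S t) (p : G.Walk u w)
    (hp : ∀ x ∈ p.support, occ S t x = 0) : u ∈ ndirty G S t := by
  cases t with
  | zero => trivial
  | succ t =>
    obtain ⟨w', hw', q, hq⟩ := hw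
    refine ⟨w', hw', p.append q, fun x hx => ?_⟩
    rcases Walk.mem_support_append_iff _ _ |>.mp hx with hx | hx
    exacts [hp x hx, hq x hx]

lemma mem_ndirty_of_adj {u w : V} (hw : w ∈ ndirty G S t) (huw : G.Adj u w)
    (hu : occ S t u = 0) : u ∈ ndirty G S t := by
  refine mem_ndirty_of_walk hw (.cons huw .nil) fun x hx => ?_
  simp only [Walk.support_cons, Walk.support_nil, List.mem_cons, List.not_mem_nil,
    or_false] at hx
  rcases hx with rfl | rfl
  exacts [hu, occ_eq_zero_of_mem_ndirty hw]

lemma mem_ndirty_succ {u : V} (hu : u ∈ ndirty G S t) (hu1 : occ S (t + 1) u = 0) :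
    u ∈ ndirty G S (t + 1) :=
  ⟨u, hu, .nil, by simpa using hu1⟩

lemma mem_ndirty_of_mem_nEdgeDirty {u : V} {f : Sym2 V} (hf : f ∈ nEdgeDirty G S t)
    (hu : u ∈ f) (hu0 : occ S t u = 0) : u ∈ ndirty G S t := by
  obtain ⟨hfE, w, hwf, hw⟩ := hf
  obtain ⟨u', rfl⟩ := Sym2.mem_iff_exists.mp hu
  rcases Sym2.mem_iff.mp hwf with rfl | rfl
  exacts [hw, mem_ndirty_of_adj hw hfE hu0]

lemma mem_ndirty_succ_of_mem_nEdgeDirty (hI : Internal S) {u : V} {f : Sym2 V}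
    (hf : f ∈ nEdgeDirty G S t) (htr : (S t).traversed ≠ some f) (hu : u ∈ f)
    (hu1 : occ S (t + 1) u = 0) : u ∈ ndirty G S (t + 1) := by
  by_cases hu0 : occ S t u = 0
  · exact mem_ndirty_succ (mem_ndirty_of_mem_nEdgeDirty hf hu hu0) hu1
  obtain ⟨d, hS⟩ := exists_slide_of_occ_succ_eq_zero hI hu0 hu1
  obtain ⟨hfE, w, hwf, hw⟩ := hf
  have hwu : w ≠ u := fun h => hu0 (h ▸ occ_eq_zero_of_mem_ndirty hw)
  have hf : f = s(u, w) := by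
    obtain ⟨u', rfl⟩ := Sym2.mem_iff_exists.mp hu
    rcases Sym2.mem_iff.mp hwf with rfl | rfl
    exacts [absurd rfl hwu, rfl]
  have hwd : w ≠ d := by
    rintro rfl
    exact htr (by rw [hS, hf]; rfl)
  have hw1 : occ S (t + 1) w = 0 := by
    rw [occ_succ_of_slide_of_ne hS hwu hwd]
    exact occ_eq_zero_of_mem_ndirty hw
  exact mem_ndirty_of_adj (mem_ndirty_succ hw hw1) (by rwa [hf] at hfE) hu1

end NodeGame

section MixedGame

variable {G : SimpleGraph V} {S : ℕ → GMove V}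

lemma nEdgeDirty_zero : nEdgeDirty G S 0 = G.edgeSet := by
  ext e
  refine ⟨fun h => h.1, fun h => ⟨h, ?_⟩⟩
  induction e using Sym2.ind with
  | _ a b => exact ⟨a, Sym2.mem_mk_left a b, trivial⟩

lemma ndirty_eq_setOf_mem_nEdgeDirty (hG : ∀ v, ∃ u, G.Adj v u) (t : ℕ) :
    ndirty G S t = {v | occ S t v = 0 ∧ ∃ e ∈ nEdgeDirty G S t, v ∈ e} := by
  ext v
  refine ⟨fun hv => ?_, fun ⟨hv0, e, he, hve⟩ => mem_ndirty_of_mem_nEdgeDirty he hve hv0⟩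
  obtain ⟨u, hvu⟩ := hG v
  exact ⟨occ_eq_zero_of_mem_ndirty hv, s(v, u), ⟨hvu, v, Sym2.mem_mk_left v u, hv⟩,
    Sym2.mem_mk_left v u⟩

lemma ndirty_eq_mdirtyNode_of_nEdgeDirty_eq (hG : ∀ v, ∃ u, G.Adj v u) {t : ℕ}
    (h : nEdgeDirty G S t = mdirty G S t) : ndirty G S t = mdirtyNode G S t := by
  rw [ndirty_eq_setOf_mem_nEdgeDirty hG, h]
  rfl

lemma nEdgeDirty_succ_subset_mdirty_succ (hL : Legal G S) (hG : ∀ v, ∃ u, G.Adj v u) {t : ℕ}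
    (h : nEdgeDirty G S t = mdirty G S t) : nEdgeDirty G S (t + 1) ⊆ mdirty G S (t + 1) := by
  rintro e ⟨hab, a, hae, w, hw, p, hp⟩
  obtain ⟨b, rfl⟩ := Sym2.mem_iff_exists.mp hae
  obtain ⟨w', hww'⟩ := hG w
  have hw0 : occ S t w = 0 := occ_eq_zero_of_mem_ndirty hw
  have hw1 : occ S (t + 1) w = 0 := hp w p.end_mem_support
  have hf : s(w, w') ∈ mdirty G S t := h ▸ ⟨hww', w, Sym2.mem_mk_left w w', hw⟩
  refine Or.inr ⟨b, a, w, w', Sym2.eq_swap, hab.symm, hww', ⟨hf,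
    traversed_ne_of_occ_eq_zero hL hw0 hw1 (Sym2.mem_mk_left w w'), fun hpos => ?_⟩, p, hp⟩
  exact absurd (hpos w (Sym2.mem_mk_left w w')) (by omega)

lemma mdirty_succ_subset_nEdgeDirty_succ (hI : Internal S) {t : ℕ}
    (h : nEdgeDirty G S t = mdirty G S t) : mdirty G S (t + 1) ⊆ nEdgeDirty G S (t + 1) := by
  rintro e (⟨he, hcleared⟩ | ⟨x, y, q, q', rfl, hxy, -, ⟨hq, hqtr, -⟩, p, hp⟩)
  · rw [← h] at he
    obtain ⟨v, hve, hv1⟩ : ∃ v ∈ e, occ S (t + 1) v = 0 := by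
      by_contra! hpos
      exact hcleared (Or.inr fun v hv => Nat.pos_of_ne_zero (hpos v hv))
    exact ⟨he.1, v, hve,
      mem_ndirty_succ_of_mem_nEdgeDirty hI he (fun htr => hcleared (Or.inl htr)) hve hv1⟩
  · rw [← h] at hq
    have hq_dirty := mem_ndirty_succ_of_mem_nEdgeDirty hI hq hqtr (Sym2.mem_mk_left q q')
      (hp q p.end_mem_support)
    exact ⟨hxy, y, Sym2.mem_mk_right x y, mem_ndirty_of_walk hq_dirty p hp⟩

lemma nEdgeDirty_eq_mdirty (hL : Legal G S) (hI : Internal S) (hG : ∀ v, ∃ u, G.Adj v u) :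
    ∀ t, nEdgeDirty G S t = mdirty G S t
  | 0 => nEdgeDirty_zero
  | t + 1 =>
    have ih := nEdgeDirty_eq_mdirty hL hI hG t
    (nEdgeDirty_succ_subset_mdirty_succ hL hG ih).antisymm
      (mdirty_succ_subset_nEdgeDirty_succ hI ih)

end MixedGame

/-- Node search and mixed edge search are equivalent: for an internal schedule, at
every time the n-dirty node set equals the m-dirty node set, and the n-dirty edge
set equals the m-dirty edge set (equivalently, the clear sets coincide). -/
theorem stmt11 {V : Type*} (G : SimpleGraph V) (hconn : G.Connected)
    (hne : G.edgeSet.Nonempty) (S : ℕ → GMove V) (hL : Legal G S) (hI : Internal S) :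
    ∀ t : ℕ, ndirty G S t = mdirtyNode G S t ∧ nEdgeDirty G S t = mdirty G S t := by
  obtain ⟨a, b, hab⟩ := ne_bot_iff_exists_adj.mp (edgeSet_nonempty.mp hne)
  have : Nontrivial V := ⟨a, b, G.ne_of_adj hab⟩
  have hG : ∀ v, ∃ u, G.Adj v u := hconn.preconnected.exists_adj_of_nontrivial
  intro t
  have hedge := nEdgeDirty_eq_mdirty hL hI hG t
  exact ⟨ndirty_eq_mdirtyNode_of_nEdgeDirty_eq hG hedge, hedge⟩
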